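/- In the clocked λ-calculus, for the Böhm-sequence combinator Y_n = (η η) δ^{n-1} applied to a variable x (n ≥ 1), there is a finite clocked reduction Y_n x ↠c τ^{2n}( x ((η η) δ^{n-1} x) ). -/

import Mathlib

/-- clocked λ-terms: λ-terms with an extra unary constructor τ -/
inductive CLam : Type
  | var : Nat → CLam
  | app : CLam → CLam → CLam
  | lam : CLam → CLam
  | tau : CLam → CLam
deriving DecidableEq

namespace CLam

def lift (d : Nat) : CLam → CLam
  | var n => if n < d then var n else var (n+1)
  | app M N => app (lift d M) (lift d N)
  | lam M => lam (lift (d+1) M)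
  | tau M => tau (lift d M)

def subst (k : Nat) (N : CLam) : CLam → CLam
  | var n => if n = k then N else if k < n then var (n-1) else var n
  | app A B => app (subst k N A) (subst k N B)
  | lam A => lam (subst (k+1) (lift 0 N) A)
  | tau A => tau (subst k N A)

/-- one-step clocked reduction: compatible closure of
    (λ.M)N → τ(M[0:=N]) and (τ M)N → τ(M N) -/
inductive CStep : CLam → CLam → Prop
  | beta (M N : CLam) : CStep (app (lam M) N) (tau (subst 0 N M))
  | tauApp (M N : CLam) : CStep (app (tau M) N) (tau (app M N))
  | appL {M M'} (N) : CStep M M' → CStep (app M N) (app M' N)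
  | appR (M) {N N'} : CStep N N' → CStep (app M N) (app M N')
  | lam {M M'} : CStep M M' → CStep (lam M) (lam M')
  | tau {M M'} : CStep M M' → CStep (tau M) (tau M')

abbrev CStar : CLam → CLam → Prop := Relation.ReflTransGen CStep

/-- n-fold τ -/
def tauN : Nat → CLam → CLam
  | 0, M => M
  | n+1, M => tau (tauN n M)

end CLam

open CLam

def xv : CLam := CLam.var 0
def eta : CLam :=
  CLam.lam (CLam.lam (CLam.app (CLam.var 0)
    (CLam.app (CLam.app (CLam.var 1) (CLam.var 1)) (CLam.var 0))))
def delta : CLam := CLam.lam (CLam.lam (CLam.app (CLam.var 0) (CLam.app (CLam.var 1) (CLam.var 0))))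

/-- M δ^k : M applied to k copies of δ from the left -/
def appD : CLam → Nat → CLam
  | M, 0 => M
  | M, k+1 => CLam.app (appD M k) delta

/-! Both `η η` and `δ A` unfold in two β-steps: `η η M ↠ τ²(M (η η M))` and
`δ A M ↠ τ²(M (A M))`. Write `Y_k := (η η) δ^k`. By induction on `k`,
`Y_k M ↠ τ^{2k+2}(M (Y_k M))` for every `M`: taking `M := δ` gives `Y_{k+1} ↠ τ^{2k+2}(δ Y_{k+1})`,
so `Y_{k+1} M ↠ τ^{2k+2}(δ Y_{k+1} M) ↠ τ^{2k+4}(M (Y_{k+1} M))`, the τ's being pushed out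
of the application by `(τ P) Q → τ(P Q)`. -/

namespace CLam

theorem subst_lift (M : CLam) : ∀ k N, subst k N (lift k M) = M := by
  induction M with
  | var n =>
      intro k N
      by_cases h : n < k
      · simp [lift, subst, h, Nat.ne_of_lt h, Nat.not_lt_of_gt h]
      · simp [lift, subst, h, show n + 1 ≠ k by omega, show k < n + 1 by omega]
  | app A B ihA ihB => intro k N; simp [lift, subst, ihA, ihB]
  | lam A ih => intro k N; simp [lift, subst, ih]
  | tau A ih => intro k N; simp [lift, subst, ih]

theorem tauN_tauN (a b : Nat) (M : CLam) : tauN a (tauN b M) = tauN (a + b) M := by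
  induction a with
  | zero => simp [tauN]
  | succ a ih => simp [tauN, ih, Nat.succ_add]

theorem CStar.congr_app_left {M M' : CLam} (N : CLam) (h : CStar M M') :
    CStar (app M N) (app M' N) :=
  h.lift (fun X => app X N) fun _ _ => CStep.appL N

theorem CStar.congr_tau {M M' : CLam} (h : CStar M M') : CStar (tau M) (tau M') :=
  h.lift CLam.tau fun _ _ => CStep.tau

theorem CStar.congr_tauN (j : Nat) {M M' : CLam} (h : CStar M M') :
    CStar (tauN j M) (tauN j M') := by
  induction j with
  | zero => exact h
  | succ j ih => exact ih.congr_tau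

theorem CStar.app_tauN (j : Nat) (M N : CLam) :
    CStar (app (tauN j M) N) (tauN j (app M N)) := by
  induction j with
  | zero => exact .refl
  | succ j ih => exact .head (CStep.tauApp _ N) ih.congr_tau

theorem CStar.beta_beta (B A M : CLam) :
    CStar (app (app (lam (lam B)) A) M) (tauN 2 (subst 0 M (subst 1 (lift 0 A) B))) :=
  .head (CStep.appL M (CStep.beta _ A)) <|
    .head (CStep.tauApp _ M) (.single (CStep.tau (CStep.beta _ M)))

theorem CStar.delta_app_app (A M : CLam) :
    CStar (app (app delta A) M) (tauN 2 (app M (app A M))) := by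
  have h := CStar.beta_beta (app (var 0) (app (var 1) (var 0))) A M
  simp only [subst, subst_lift, reduceIte, Nat.zero_ne_one, Nat.lt_irrefl, Nat.not_lt_zero] at h
  exact h

theorem CStar.etaEta_app (M : CLam) :
    CStar (app (app eta eta) M) (tauN 2 (app M (app (app eta eta) M))) := by
  have h := CStar.beta_beta (app (var 0) (app (app (var 1) (var 1)) (var 0))) eta M
  simp only [subst, subst_lift, reduceIte, Nat.zero_ne_one, Nat.lt_irrefl, Nat.not_lt_zero] at h
  exact h

theorem CStar.app_of_cstar_delta_app {A : CLam} {j : Nat}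
    (hA : CStar A (tauN j (app delta A))) (M : CLam) :
    CStar (app A M) (tauN (j + 2) (app M (app A M))) := by
  rw [← tauN_tauN]
  exact ((hA.congr_app_left M).trans (CStar.app_tauN j _ M)).trans
    ((CStar.delta_app_app A M).congr_tauN j)

theorem CStar.appD_etaEta_app (k : Nat) (M : CLam) :
    CStar (app (appD (app eta eta) k) M)
      (tauN (2 * k + 2) (app M (app (appD (app eta eta) k) M))) := by
  induction k generalizing M with
  | zero => exact CStar.etaEta_app M
  | succ k ih => exact CStar.app_of_cstar_delta_app (ih delta) M

end CLam

theorem boehm_clocked :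
    ∀ n : Nat, 1 ≤ n →
      CStar (CLam.app (appD (CLam.app eta eta) (n-1)) xv)
        (tauN (2*n) (CLam.app xv (CLam.app (appD (CLam.app eta eta) (n-1)) xv))) := by
  rintro (_ | k) hn
  · omega
  · simpa [Nat.mul_succ] using CStar.appD_etaEta_app k xv
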